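/- arXiv:2005.07149 — 2 statements merged into one kernel-verified Lean document; each statement's English description precedes it below -/
import Mathlib

section
/- Let (s_n) be a sequence of non-negative real numbers with s_n ≤ d for all n, where d ∈ ℕ∖{0}. Let (α_n) ⊂ (0,1) and let (r_n), (v_n) be sequences of real numbers. Assume there is a monotone function A : ℕ → ℕ with Σ_{i=1}^{A(k)} α_i ≥ k for all k ∈ ℕ, and that s_{i+1} ≤ (1−α_i)(s_i + v_i) + α_i r_i for all i ∈ ℕ. Let k, n, q ∈ ℕ be such that for all i ∈ [n,q], v_i ≤ 1/(3(k+1)(q+1)) and r_i ≤ 1/(3(k+1)). Then for all i ∈ [σ(k,n), q] one has s_i ≤ 1/(k+1), where σ(k,n) := A(n + ⌈ln(3d(k+1))⌉) + 1. -/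
/-!
Unrolling the recursion from `n` gives, with `P = ∏_{n ≤ j < i} (1 - α j)`,
`s i ≤ P * s n + (i - n) * V + (1 - P) * R` whenever `v ≤ V` and `r ≤ R` on `[n, i)`.
Since `i > A (n + m)`, the weights `α j` for `n ≤ j < i` sum to at least `m = ⌈ln (3d(k+1))⌉`, so
`P ≤ exp (-m) ≤ 1 / (3d(k+1))`. With `V = R / (q + 1)` and `R = 1 / (3(k+1))` each of the three
terms is at most `1 / (3(k+1))`.
-/

open Finset Real

lemma le_of_le_sum_Icc_of_le_one {α : ℕ → ℝ} (hα : ∀ i, α i ≤ 1) {k N : ℕ}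
    (h : (k : ℝ) ≤ ∑ i ∈ Icc 1 N, α i) : k ≤ N := by
  have : ∑ i ∈ Icc 1 N, α i ≤ N := by
    simpa using sum_le_card_nsmul (Icc 1 N) α 1 fun i _ => hα i
  exact_mod_cast h.trans this

lemma le_sum_Ico_of_add_le_sum_Icc {α : ℕ → ℝ} (hα0 : ∀ i, 0 ≤ α i) (hα1 : ∀ i, α i ≤ 1)
    {n m N i : ℕ} (hN : ((n + m : ℕ) : ℝ) ≤ ∑ j ∈ Icc 1 N, α j) (hNi : N < i) (hni : n ≤ i) :
    (m : ℝ) ≤ ∑ j ∈ Ico n i, α j := by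
  have hsub : ∑ j ∈ Icc 1 N, α j ≤ ∑ j ∈ range i, α j :=
    sum_le_sum_of_subset_of_nonneg (fun j hj => by simp only [mem_Icc, mem_range] at hj ⊢; omega)
      fun j _ _ => hα0 j
  have hn : ∑ j ∈ range n, α j ≤ n := by
    simpa using sum_le_card_nsmul (range n) α 1 fun j _ => hα1 j
  rw [← sum_range_add_sum_Ico α hni] at hsub
  push_cast at hN
  linarith

lemma prod_one_sub_le_exp_neg_sum {ι : Type*} (t : Finset ι) {α : ι → ℝ}
    (hα : ∀ i ∈ t, α i ≤ 1) : ∏ i ∈ t, (1 - α i) ≤ exp (-∑ i ∈ t, α i) := by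
  rw [← sum_neg_distrib, exp_sum]
  exact prod_le_prod (fun i hi => sub_nonneg.2 (hα i hi)) fun i _ => one_sub_le_exp_neg _

lemma exp_neg_ceil_log_mul_mul_le_inv {c x : ℝ} (hc : 0 < c) (hx : 0 ≤ x) :
    exp (-⌈log (c * x)⌉₊) * x ≤ c⁻¹ := by
  rcases hx.eq_or_lt with rfl | hx
  · simpa using hc.le
  calc exp (-⌈log (c * x)⌉₊) * x ≤ exp (-log (c * x)) * x := by gcongr; exact Nat.le_ceil _
    _ = c⁻¹ := by rw [exp_neg, exp_log (by positivity)]; field_simp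

lemma le_prod_mul_add_of_le_one_sub_mul_add {s α r v : ℕ → ℝ} {V R : ℝ}
    (hα0 : ∀ i, 0 ≤ α i) (hα1 : ∀ i, α i ≤ 1) (hV : 0 ≤ V)
    (hrec : ∀ i, s (i + 1) ≤ (1 - α i) * (s i + v i) + α i * r i) {n m : ℕ} (hnm : n ≤ m)
    (hv : ∀ i ∈ Ico n m, v i ≤ V) (hr : ∀ i ∈ Ico n m, r i ≤ R) :
    s m ≤ (∏ i ∈ Ico n m, (1 - α i)) * s n + (m - n : ℕ) * V
      + (1 - ∏ i ∈ Ico n m, (1 - α i)) * R := by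
  induction m, hnm using Nat.le_induction with
  | base => simp
  | succ m hnm ih =>
    have hm : m ∈ Ico n (m + 1) := mem_Ico.2 ⟨hnm, m.lt_succ_self⟩
    have hsub : Ico n m ⊆ Ico n (m + 1) := Ico_subset_Ico_right m.le_succ
    have ih := ih (fun i hi => hv i (hsub hi)) fun i hi => hr i (hsub hi)
    set P := ∏ i ∈ Ico n m, (1 - α i)
    have h1α : 0 ≤ 1 - α m := sub_nonneg.2 (hα1 m)
    have hc : ((m + 1 - n : ℕ) : ℝ) = (m - n : ℕ) + 1 := by
      rw [Nat.sub_add_comm hnm]; push_cast; ring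
    rw [prod_Ico_succ_top hnm, hc]
    calc s (m + 1) ≤ (1 - α m) * (s m + v m) + α m * r m := hrec m
      _ ≤ (1 - α m) * (P * s n + (m - n : ℕ) * V + (1 - P) * R + V) + α m * R := by
          gcongr
          · exact hv m hm
          · exact hα0 m
          · exact hr m hm
      _ = P * (1 - α m) * s n + (1 - α m) * (((m - n : ℕ) + 1) * V)
            + (1 - P * (1 - α m)) * R := by ring
      _ ≤ P * (1 - α m) * s n + ((m - n : ℕ) + 1) * V + (1 - P * (1 - α m)) * R := by
          gcongr _ + ?_ + _
          exact mul_le_of_le_one_left (by positivity) (sub_le_self 1 (hα0 m))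

theorem quantitative_lemma_Xu2_general
    (d : ℕ)
    (s α r v : ℕ → ℝ)
    (hsd : ∀ n, s n ≤ d)
    (hα : ∀ n, α n ∈ Set.Ioo (0 : ℝ) 1)
    (A : ℕ → ℕ)
    (hA : ∀ k : ℕ, (k : ℝ) ≤ ∑ i ∈ Finset.Icc 1 (A k), α i)
    (hrec : ∀ i, s (i + 1) ≤ (1 - α i) * (s i + v i) + α i * r i)
    (k n q : ℕ)
    (hv : ∀ i, n ≤ i → i ≤ q → v i ≤ 1 / (3 * (k + 1) * (q + 1)))
    (hr : ∀ i, n ≤ i → i ≤ q → r i ≤ 1 / (3 * (k + 1))) :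
    ∀ i, A (n + Nat.ceil (Real.log (3 * (d : ℝ) * (k + 1)))) + 1 ≤ i → i ≤ q →
      s i ≤ 1 / (k + 1) := by
  intro i hi hiq
  set m := ⌈log (3 * (d : ℝ) * (k + 1))⌉₊ with hm
  set R : ℝ := 1 / (3 * (k + 1))
  have hα0 j : 0 ≤ α j := (hα j).1.le
  have hα1 j : α j ≤ 1 := (hα j).2.le
  have hni : n ≤ i := by have := le_of_le_sum_Icc_of_le_one hα1 (hA (n + m)); omega
  have hsum : (m : ℝ) ≤ ∑ j ∈ Ico n i, α j := le_sum_Ico_of_add_le_sum_Icc hα0 hα1 (hA _) hi hni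
  have hunroll := le_prod_mul_add_of_le_one_sub_mul_add hα0 hα1 (by positivity) hrec hni
    (fun j hj => hv j (mem_Ico.1 hj).1 (by grind)) fun j hj => hr j (mem_Ico.1 hj).1 (by grind)
  set P := ∏ j ∈ Ico n i, (1 - α j)
  have hP0 : 0 ≤ P := prod_nonneg fun j _ => sub_nonneg.2 (hα1 j)
  have hPs : P * s n ≤ R :=
    calc P * s n ≤ P * d := mul_le_mul_of_nonneg_left (hsd n) hP0
      _ ≤ exp (-m) * d := by
          gcongr
          exact (prod_one_sub_le_exp_neg_sum _ fun j _ => hα1 j).trans (by gcongr)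
      _ ≤ R := by
          rw [hm, show 3 * (d : ℝ) * (k + 1) = 3 * (k + 1) * d by ring]
          simpa only [R, one_div] using
            exp_neg_ceil_log_mul_mul_le_inv (by positivity) d.cast_nonneg
  have hV : ((i - n : ℕ) : ℝ) * (1 / (3 * (k + 1) * (q + 1))) ≤ R := by
    rw [show R = (q + 1) * (1 / (3 * (k + 1) * (q + 1))) by simp only [R]; field_simp]
    gcongr
    exact_mod_cast (i.sub_le n).trans (by omega)
  have hPR : (1 - P) * R ≤ R := mul_le_of_le_one_left (by positivity) (sub_le_self 1 hP0)
  calc s i ≤ R + R + R := by linarith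
    _ = 1 / (k + 1) := by simp only [R]; field_simp; ring

/-- quantitative lemma, variant of Lemma 14 of [PP(ta)] with γ ≡ 0. -/
theorem quantitative_lemma_Xu2
    (d : ℕ) (hd : 0 < d)
    (s α r v : ℕ → ℝ)
    (hs : ∀ n, 0 ≤ s n) (hsd : ∀ n, s n ≤ d)
    (hα : ∀ n, α n ∈ Set.Ioo (0 : ℝ) 1)
    (A : ℕ → ℕ) (hAmono : Monotone A)
    (hA : ∀ k : ℕ, (k : ℝ) ≤ ∑ i ∈ Finset.Icc 1 (A k), α i)
    (hrec : ∀ i, s (i + 1) ≤ (1 - α i) * (s i + v i) + α i * r i)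
    (k n q : ℕ)
    (hv : ∀ i, n ≤ i → i ≤ q → v i ≤ 1 / (3 * (k + 1) * (q + 1)))
    (hr : ∀ i, n ≤ i → i ≤ q → r i ≤ 1 / (3 * (k + 1))) :
    ∀ i, A (n + Nat.ceil (Real.log (3 * (d : ℝ) * (k + 1)))) + 1 ≤ i → i ≤ q →
      s i ≤ 1 / (k + 1) :=
  quantitative_lemma_Xu2_general d s α r v hsd hα A hA hrec k n q hv hr
end

section
/- Let H be a real Hilbert space, T : H → H nonexpansive, (β_n), (λ_n) ⊂ (0,1], x₀ ∈ H, and let (x_n) be generated by the (T-KM) iteration. Let N ∈ ℕ∖{0} satisfy N ≥ max{‖x₀ − p‖, ‖p‖} for some p ∈ Fix T, and let D, B, L : ℕ → ℕ be monotone functions satisfying (Q3), (Q4), (Q6). Then for all k ∈ ℕ and all n ≥ ν₁(k) one has ‖x_{n+1} − x_n‖ ≤ 1/(k+1), where ν₁(k) := D(G(3k+2) + ⌈ln(6N(k+1))⌉) + 1 and G(k) := max{B(4N(k+1)−1), L(10N(k+1)−1)}. -/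
/-- `G(k) := max{B(4N(k+1)−1), L(10N(k+1)−1)}`. -/
def Gfun (N : ℕ) (B L : ℕ → ℕ) (k : ℕ) : ℕ :=
  max (B (4 * N * (k + 1) - 1)) (L (10 * N * (k + 1) - 1))

/-- `ν₁(k) := D(G(3k+2) + ⌈ln(6N(k+1))⌉) + 1`. -/
noncomputable def nu1 (N : ℕ) (D B L : ℕ → ℕ) (k : ℕ) : ℕ :=
  D (Gfun N B L (3 * k + 2) + Nat.ceil (Real.log (6 * (N : ℝ) * (k + 1)))) + 1

/-!
All iterates `x n` and all points `β n • x n` lie in the closed ball of radius `N` about the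
fixed point `p`, a convex set that also contains `0` and is mapped into itself by `T`; hence
every difference that occurs below is bounded by `2N`. Comparing two consecutive steps gives
`‖x (n+2) - x (n+1)‖ ≤ β (n+1) ‖x (n+1) - x n‖ + 2N (|Δβ (n+1)| + |Δλ (n+1)|)`, and unrolling
this from `g = G(3k+2)` to `n` bounds `‖x (n+1) - x n‖` by `2N ∏ β i` plus `2N` times the
variations of `β` and `λ` past `g`. Since `∏ β i ≤ exp (-∑ (1 - β i))`, (Q3) makes the first
term at most `1/(3(k+1))`, and (Q4), (Q6) make the other two at most `1/(6(k+1))` and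
`1/(15(k+1))`.
-/

open Finset Function Metric Real

theorem dist_le_two_mul_of_mem_closedBall {X : Type*} [PseudoMetricSpace X] {p a b : X} {r : ℝ}
    (ha : a ∈ closedBall p r) (hb : b ∈ closedBall p r) : dist a b ≤ 2 * r := by
  linarith [dist_triangle_right a b p, mem_closedBall.1 ha, mem_closedBall.1 hb]

theorem apply_mem_closedBall_of_isFixedPt {E : Type*} [SeminormedAddCommGroup E] {T : E → E}
    (hT : ∀ a b, ‖T a - T b‖ ≤ ‖a - b‖) {p u : E} (hp : IsFixedPt T p) {r : ℝ}
    (hu : u ∈ closedBall p r) : T u ∈ closedBall p r := by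
  rw [mem_closedBall_iff_norm] at hu ⊢
  simpa [hp.eq] using (hT u p).trans hu

theorem le_prod_mul_add_sum_of_le_mul_add {a b e : ℕ → ℝ} (hb : ∀ n, b n ∈ Set.Icc 0 1)
    (he : ∀ n, 0 ≤ e n) (h : ∀ n, a (n + 1) ≤ b (n + 1) * a n + e (n + 1)) {m n : ℕ}
    (hmn : m ≤ n) : a n ≤ (∏ i ∈ Ioc m n, b i) * a m + ∑ i ∈ Ioc m n, e i := by
  induction n, hmn using Nat.le_induction with
  | base => simp
  | succ n hmn ih =>
    rw [prod_Ioc_succ_top hmn, sum_Ioc_succ_top hmn]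
    have hsum : b (n + 1) * ∑ i ∈ Ioc m n, e i ≤ ∑ i ∈ Ioc m n, e i :=
      mul_le_of_le_one_left (sum_nonneg fun i _ ↦ he i) (hb _).2
    calc a (n + 1) ≤ b (n + 1) * a n + e (n + 1) := h n
      _ ≤ b (n + 1) * ((∏ i ∈ Ioc m n, b i) * a m + ∑ i ∈ Ioc m n, e i) + e (n + 1) := by
          gcongr
          exact (hb _).1
      _ ≤ _ := by linarith

theorem prod_le_exp_neg_sum_one_sub {ι : Type*} (s : Finset ι) {b : ι → ℝ}
    (hb : ∀ i ∈ s, 0 ≤ b i) : ∏ i ∈ s, b i ≤ exp (-∑ i ∈ s, (1 - b i)) :=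
  calc ∏ i ∈ s, b i ≤ ∏ i ∈ s, exp (-(1 - b i)) :=
        prod_le_prod hb fun i _ ↦ by linarith [add_one_le_exp (-(1 - b i))]
    _ = exp (-∑ i ∈ s, (1 - b i)) := by rw [← exp_sum, sum_neg_distrib]

theorem le_sum_Ioc_of_le_sum_Icc {f : ℕ → ℝ} (hf : ∀ i, f i ∈ Set.Icc 0 1) {g c M n : ℕ}
    (h : ((g + c : ℕ) : ℝ) ≤ ∑ i ∈ Icc 1 M, f i) (hMn : M ≤ n) :
    g ≤ n ∧ (c : ℝ) ≤ ∑ i ∈ Ioc g n, f i := by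
  have hsum_le : ∀ m, ∑ i ∈ Ioc 0 m, f i ≤ m := fun m ↦ by
    simpa using sum_le_card_nsmul (Ioc 0 m) f 1 fun i _ ↦ (hf i).2
  rw [show Icc 1 M = Ioc 0 M from Icc_add_one_left_eq_Ioc 0 M] at h
  have hgc : g + c ≤ M := by exact_mod_cast h.trans (hsum_le M)
  have hgn : g ≤ n := by omega
  refine ⟨hgn, ?_⟩
  have hmono : ∑ i ∈ Ioc 0 M, f i ≤ ∑ i ∈ Ioc 0 n, f i :=
    sum_le_sum_of_subset_of_nonneg (Ioc_subset_Ioc_right hMn) fun i _ _ ↦ (hf i).1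
  rw [← sum_Ioc_consecutive f (Nat.zero_le g) hgn] at hmono
  push_cast at h
  linarith [hsum_le g]

theorem sum_Ioc_abs_sub_le_of_rate {f : ℕ → ℝ} {R : ℕ → ℕ}
    (hR : ∀ k n : ℕ, ∑ i ∈ Icc (R k + 1) (R k + n), |f i - f (i - 1)| ≤ 1 / (k + 1))
    {m g : ℕ} (hm : 0 < m) (hg : R (m - 1) ≤ g) (n : ℕ) :
    ∑ i ∈ Ioc g n, |f i - f (i - 1)| ≤ 1 / m :=
  calc ∑ i ∈ Ioc g n, |f i - f (i - 1)|
      ≤ ∑ i ∈ Icc (R (m - 1) + 1) (R (m - 1) + n), |f i - f (i - 1)| :=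
        sum_le_sum_of_subset_of_nonneg (fun i hi ↦ by simp only [mem_Ioc, mem_Icc] at hi ⊢; omega)
          fun i _ _ ↦ abs_nonneg _
    _ ≤ 1 / m := by simpa [Nat.cast_pred hm] using hR (m - 1) n

section KrasnoselskiiMann

variable {E : Type*} [NormedAddCommGroup E] [NormedSpace ℝ E] {T : E → E}

def kmStep (T : E → E) (l : ℝ) (u : E) : E := u + l • (T u - u)

theorem smul_mem_closedBall_of_norm_le {p z : E} {r b : ℝ} (hpr : ‖p‖ ≤ r)
    (hz : z ∈ closedBall p r) (hb : b ∈ Set.Icc 0 1) : b • z ∈ closedBall p r :=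
  (convex_closedBall p r).smul_mem_of_zero_mem (by simpa using hpr) hz hb

theorem norm_smul_sub_smul_le (b b' : ℝ) (z z' : E) :
    ‖b' • z' - b • z‖ ≤ |b'| * ‖z' - z‖ + |b' - b| * ‖z‖ := by
  have hdecomp : b' • z' - b • z = b' • (z' - z) + (b' - b) • z := by module
  rw [hdecomp, ← Real.norm_eq_abs, ← Real.norm_eq_abs, ← norm_smul, ← norm_smul]
  exact norm_add_le _ _

theorem kmStep_mem_closedBall (hT : ∀ a b, ‖T a - T b‖ ≤ ‖a - b‖) {p u : E} (hp : IsFixedPt T p)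
    {r l : ℝ} (hu : u ∈ closedBall p r) (hl : l ∈ Set.Icc 0 1) : kmStep T l u ∈ closedBall p r :=
  (convex_closedBall p r).add_smul_sub_mem hu (apply_mem_closedBall_of_isFixedPt hT hp hu) hl

theorem norm_kmStep_sub_kmStep_le (hT : ∀ a b, ‖T a - T b‖ ≤ ‖a - b‖) {l l' : ℝ}
    (hl' : l' ∈ Set.Icc 0 1) (u u' : E) :
    ‖kmStep T l' u' - kmStep T l u‖ ≤ ‖u' - u‖ + |l' - l| * ‖T u - u‖ := by
  have hdecomp : kmStep T l' u' - kmStep T l u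
      = (1 - l') • (u' - u) + l' • (T u' - T u) + (l' - l) • (T u - u) := by
    simp only [kmStep]; module
  calc ‖kmStep T l' u' - kmStep T l u‖
      ≤ (1 - l') * ‖u' - u‖ + l' * ‖T u' - T u‖ + |l' - l| * ‖T u - u‖ := by
        rw [hdecomp]
        refine norm_add₃_le.trans_eq ?_
        rw [norm_smul, norm_smul, norm_smul, Real.norm_of_nonneg (sub_nonneg.2 hl'.2),
          Real.norm_of_nonneg hl'.1, Real.norm_eq_abs]
    _ ≤ (1 - l') * ‖u' - u‖ + l' * ‖u' - u‖ + |l' - l| * ‖T u - u‖ := by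
        gcongr
        · exact hl'.1
        · exact hT u' u
    _ = ‖u' - u‖ + |l' - l| * ‖T u - u‖ := by ring

variable {β lam : ℕ → ℝ} {x : ℕ → E} {p : E} {r : ℝ}

theorem tkm_mem_closedBall (hT : ∀ a b, ‖T a - T b‖ ≤ ‖a - b‖) (hp : IsFixedPt T p)
    (hβ : ∀ n, β n ∈ Set.Icc 0 1) (hlam : ∀ n, lam n ∈ Set.Icc 0 1)
    (hx : ∀ n, x (n + 1) = kmStep T (lam n) (β n • x n)) (hpr : ‖p‖ ≤ r)
    (hx0 : x 0 ∈ closedBall p r) (n : ℕ) : x n ∈ closedBall p r := by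
  induction n with
  | zero => exact hx0
  | succ n ih =>
    rw [hx n]
    exact kmStep_mem_closedBall hT hp (smul_mem_closedBall_of_norm_le hpr ih (hβ n)) (hlam n)

theorem tkm_norm_sub_succ_le (hT : ∀ a b, ‖T a - T b‖ ≤ ‖a - b‖) (hp : IsFixedPt T p)
    (hβ : ∀ n, β n ∈ Set.Icc 0 1) (hlam : ∀ n, lam n ∈ Set.Icc 0 1)
    (hx : ∀ n, x (n + 1) = kmStep T (lam n) (β n • x n)) (hpr : ‖p‖ ≤ r)
    (hx0 : x 0 ∈ closedBall p r) (n : ℕ) :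
    ‖x (n + 1 + 1) - x (n + 1)‖
      ≤ β (n + 1) * ‖x (n + 1) - x n‖ + 2 * r * (|β (n + 1) - β n| + |lam (n + 1) - lam n|) := by
  have hxn := tkm_mem_closedBall hT hp hβ hlam hx hpr hx0 n
  have hyn := smul_mem_closedBall_of_norm_le hpr hxn (hβ n)
  have h0 : (0 : E) ∈ closedBall p r := by simpa using hpr
  have hnorm_x : ‖x n‖ ≤ 2 * r := by
    simpa using dist_le_two_mul_of_mem_closedBall hxn h0
  have hresidual : ‖T (β n • x n) - β n • x n‖ ≤ 2 * r := by
    rw [← dist_eq_norm]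
    exact dist_le_two_mul_of_mem_closedBall (apply_mem_closedBall_of_isFixedPt hT hp hyn) hyn
  calc ‖x (n + 1 + 1) - x (n + 1)‖
      = ‖kmStep T (lam (n + 1)) (β (n + 1) • x (n + 1)) - kmStep T (lam n) (β n • x n)‖ := by
        rw [hx (n + 1), hx n]
    _ ≤ ‖β (n + 1) • x (n + 1) - β n • x n‖
          + |lam (n + 1) - lam n| * ‖T (β n • x n) - β n • x n‖ :=
        norm_kmStep_sub_kmStep_le hT (hlam _) _ _
    _ ≤ (|β (n + 1)| * ‖x (n + 1) - x n‖ + |β (n + 1) - β n| * ‖x n‖)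
          + |lam (n + 1) - lam n| * (2 * r) := by
        gcongr
        exact norm_smul_sub_smul_le _ _ _ _
    _ ≤ β (n + 1) * ‖x (n + 1) - x n‖ + |β (n + 1) - β n| * (2 * r)
          + |lam (n + 1) - lam n| * (2 * r) := by
        rw [abs_of_nonneg (hβ _).1]
        gcongr
    _ = β (n + 1) * ‖x (n + 1) - x n‖
          + 2 * r * (|β (n + 1) - β n| + |lam (n + 1) - lam n|) := by ring

theorem tkm_norm_sub_succ_le_prod_add_variation (hT : ∀ a b, ‖T a - T b‖ ≤ ‖a - b‖)
    (hp : IsFixedPt T p) (hβ : ∀ n, β n ∈ Set.Icc 0 1) (hlam : ∀ n, lam n ∈ Set.Icc 0 1)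
    (hx : ∀ n, x (n + 1) = kmStep T (lam n) (β n • x n)) (hpr : ‖p‖ ≤ r)
    (hx0 : x 0 ∈ closedBall p r) {m n : ℕ} (hmn : m ≤ n) :
    ‖x (n + 1) - x n‖ ≤ (∏ i ∈ Ioc m n, β i) * (2 * r)
      + 2 * r * (∑ i ∈ Ioc m n, |β i - β (i - 1)| + ∑ i ∈ Ioc m n, |lam i - lam (i - 1)|) := by
  have hr : 0 ≤ r := (norm_nonneg p).trans hpr
  have hunroll := le_prod_mul_add_sum_of_le_mul_add (a := fun n ↦ ‖x (n + 1) - x n‖)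
    (e := fun i ↦ 2 * r * (|β i - β (i - 1)| + |lam i - lam (i - 1)|)) hβ
    (fun i ↦ by positivity) (fun n ↦ by simpa using tkm_norm_sub_succ_le hT hp hβ hlam hx hpr hx0 n)
    hmn
  have hstep : ‖x (m + 1) - x m‖ ≤ 2 * r := by
    rw [← dist_eq_norm]
    exact dist_le_two_mul_of_mem_closedBall (tkm_mem_closedBall hT hp hβ hlam hx hpr hx0 _)
      (tkm_mem_closedBall hT hp hβ hlam hx hpr hx0 _)
  have hprod : 0 ≤ ∏ i ∈ Ioc m n, β i := prod_nonneg fun i _ ↦ (hβ i).1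
  rw [← sum_add_distrib, mul_sum]
  calc ‖x (n + 1) - x n‖ ≤ _ := hunroll
    _ ≤ _ := by gcongr

end KrasnoselskiiMann

theorem tkm_asymptotic_regularity_consecutive_general
    {H : Type*} [NormedAddCommGroup H] [InnerProductSpace ℝ H]
    (T : H → H) (hT : ∀ a b : H, ‖T a - T b‖ ≤ ‖a - b‖)
    (β lam : ℕ → ℝ)
    (hβ : ∀ n, β n ∈ Set.Ioc (0 : ℝ) 1)
    (hlam : ∀ n, lam n ∈ Set.Ioc (0 : ℝ) 1)
    (x : ℕ → H)
    (hx : ∀ n, x (n + 1) = β n • x n + lam n • (T (β n • x n) - β n • x n))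
    (N : ℕ) (hN : 0 < N)
    (p : H) (hp : T p = p)
    (hNp : max ‖x 0 - p‖ ‖p‖ ≤ (N : ℝ))
    (D B L : ℕ → ℕ)
    (hQ3 : ∀ k : ℕ, (k : ℝ) ≤ ∑ i ∈ Finset.Icc 1 (D k), (1 - β i))
    (hQ4 : ∀ k n : ℕ, ∑ i ∈ Finset.Icc (B k + 1) (B k + n), |β i - β (i - 1)| ≤ 1 / (k + 1))
    (hQ6 : ∀ k n : ℕ, ∑ i ∈ Finset.Icc (L k + 1) (L k + n), |lam i - lam (i - 1)| ≤ 1 / (k + 1)) :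
    ∀ k n : ℕ, nu1 N D B L k ≤ n → ‖x (n + 1) - x n‖ ≤ 1 / (k + 1) := by
  intro k n hn
  unfold nu1 at hn
  set g := Gfun N B L (3 * k + 2)
  set c := ⌈log (6 * (N : ℝ) * (k + 1))⌉₊
  have hβ' : ∀ n, β n ∈ Set.Icc 0 1 := fun n ↦ Set.Ioc_subset_Icc_self (hβ n)
  obtain ⟨hgn, hdrift⟩ := le_sum_Ioc_of_le_sum_Icc (g := g) (c := c)
    (fun i ↦ ⟨sub_nonneg.2 (hβ' i).2, by linarith [(hβ' i).1]⟩) (hQ3 _)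
    (show D (g + c) ≤ n by omega)
  have hprod : ∏ i ∈ Ioc g n, β i ≤ 1 / (6 * N * (k + 1)) :=
    calc ∏ i ∈ Ioc g n, β i ≤ exp (-∑ i ∈ Ioc g n, (1 - β i)) :=
          prod_le_exp_neg_sum_one_sub _ fun i _ ↦ (hβ' i).1
      _ ≤ exp (-log (6 * N * (k + 1))) :=
          exp_le_exp.2 (by linarith [Nat.le_ceil (log (6 * (N : ℝ) * (k + 1)))])
      _ = 1 / (6 * N * (k + 1)) := by rw [exp_neg, exp_log (by positivity), one_div]
  have hβvar := sum_Ioc_abs_sub_le_of_rate hQ4 (m := 4 * N * (3 * k + 2 + 1)) (g := g)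
    (by positivity) (le_max_left _ _) n
  have hlamvar := sum_Ioc_abs_sub_le_of_rate hQ6 (m := 10 * N * (3 * k + 2 + 1)) (g := g)
    (by positivity) (le_max_right _ _) n
  push_cast at hβvar hlamvar
  calc ‖x (n + 1) - x n‖
      ≤ (∏ i ∈ Ioc g n, β i) * (2 * N)
        + 2 * N * (∑ i ∈ Ioc g n, |β i - β (i - 1)| + ∑ i ∈ Ioc g n, |lam i - lam (i - 1)|) :=
        tkm_norm_sub_succ_le_prod_add_variation hT hp hβ' (fun n ↦ Set.Ioc_subset_Icc_self (hlam n))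
          hx ((le_max_right _ _).trans hNp)
          (mem_closedBall_iff_norm.2 ((le_max_left _ _).trans hNp)) hgn
    _ ≤ 1 / (6 * N * (k + 1)) * (2 * N)
        + 2 * N * (1 / (4 * N * (3 * k + 2 + 1)) + 1 / (10 * N * (3 * k + 2 + 1))) := by
          gcongr
    _ ≤ 1 / (k + 1) := by
        field_simp
        linarith

/-- rate of asymptotic regularity `‖x_{n+1} − x_n‖ → 0`
for the T-KM iteration. -/
theorem tkm_asymptotic_regularity_consecutive
    {H : Type*} [NormedAddCommGroup H] [InnerProductSpace ℝ H] [CompleteSpace H]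
    (T : H → H) (hT : ∀ a b : H, ‖T a - T b‖ ≤ ‖a - b‖)
    (β lam : ℕ → ℝ)
    (hβ : ∀ n, β n ∈ Set.Ioc (0 : ℝ) 1)
    (hlam : ∀ n, lam n ∈ Set.Ioc (0 : ℝ) 1)
    (x : ℕ → H)
    (hx : ∀ n, x (n + 1) = β n • x n + lam n • (T (β n • x n) - β n • x n))
    (N : ℕ) (hN : 0 < N)
    (p : H) (hp : T p = p)
    (hNp : max ‖x 0 - p‖ ‖p‖ ≤ (N : ℝ))
    (D B L : ℕ → ℕ)
    (hDmono : Monotone D) (hBmono : Monotone B) (hLmono : Monotone L)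
    (hQ3 : ∀ k : ℕ, (k : ℝ) ≤ ∑ i ∈ Finset.Icc 1 (D k), (1 - β i))
    (hQ4 : ∀ k n : ℕ, ∑ i ∈ Finset.Icc (B k + 1) (B k + n), |β i - β (i - 1)| ≤ 1 / (k + 1))
    (hQ6 : ∀ k n : ℕ, ∑ i ∈ Finset.Icc (L k + 1) (L k + n), |lam i - lam (i - 1)| ≤ 1 / (k + 1)) :
    ∀ k n : ℕ, nu1 N D B L k ≤ n → ‖x (n + 1) - x n‖ ≤ 1 / (k + 1) :=
  tkm_asymptotic_regularity_consecutive_general T hT β lam hβ hlam x hx N hN p hp hNp D B L hQ3 hQ4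
    hQ6
end
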